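/- arXiv:2005.03630 — 3 statements merged into one kernel-verified Lean document; each statement's English description precedes it below -/
import Mathlib

section
/- For any LMP (S, Σ, {τ_a : a ∈ L}): σ(⟦𝓛⟧) ⊆ G(σ(⟦𝓛⟧)), and the relation ∼e := R(σ(⟦𝓛⟧)) satisfies O(∼e) ⊆ ∼e; that is, σ(⟦𝓛⟧) is a post-fixpoint of G and event bisimilarity is a pre-fixpoint of O. -/
open MeasureTheory

/-- A labelled Markov process over the measurable space `S` with label set `L`:
each `τ a` is a Markov kernel, i.e. `τ a s` is a subprobability measure for each state `s`,
and `s ↦ τ a s E` is measurable for each measurable `E`. -/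
structure LMP (S : Type*) (L : Type*) [MeasurableSpace S] where
  τ : L → S → Measure S
  prob_le_one : ∀ (a : L) (s : S), τ a s Set.univ ≤ 1
  measurable_eval : ∀ (a : L) (E : Set S), MeasurableSet E → Measurable fun s => τ a s E

namespace LMP

variable {S L : Type*} [MeasurableSpace S]

/-- `A` is `R`-closed: anything related to a point of `A` lies in `A`. -/
def RClosed (R : Set (S × S)) (A : Set S) : Prop :=
  ∀ ⦃x⦄, x ∈ A → ∀ ⦃s⦄, (x, s) ∈ R → s ∈ A

/-- `Σ(R)`: the family of measurable `R`-closed sets. -/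
def sigmaCl (R : Set (S × S)) : Set (Set S) :=
  {A | MeasurableSet A ∧ RClosed R A}

/-- `R(Λ)`: the relation identifying states belonging to exactly the same members of `Λ`. -/
def rel (Λ : Set (Set S)) : Set (S × S) :=
  {p | ∀ A ∈ Λ, p.1 ∈ A ↔ p.2 ∈ A}

/-- `R^T(Λ)`: states assigning the same probabilities to every member of `Λ`, for all labels. -/
def relT (M : LMP S L) (Λ : Set (Set S)) : Set (S × S) :=
  {p | ∀ (a : L), ∀ E ∈ Λ, M.τ a p.1 E = M.τ a p.2 E}

/-- The operator `𝒪`. -/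
def Oop (M : LMP S L) (R : Set (S × S)) : Set (S × S) :=
  M.relT (sigmaCl R)

/-- The operator `𝒢`. -/
def Gop (M : LMP S L) (Λ : Set (Set S)) : Set (Set S) :=
  sigmaCl (M.relT Λ)

/-- The members of the σ-algebra generated by a family of sets. -/
def sigmaGen (U : Set (Set S)) : Set (Set S) :=
  {A | MeasurableSet[MeasurableSpace.generateFrom U] A}

/-- Transfinite iterates of `𝒪`. -/
noncomputable def Oiter (M : LMP S L) (R : Set (S × S)) (α : Ordinal) : Set (S × S) :=
  Ordinal.limitRecOn α R (fun _ prev => M.Oop prev)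
    (fun o _ ih => ⋂ (o' : Ordinal) (h : o' < o), ih o' h)

/-- Transfinite iterates of `𝒢`. -/
noncomputable def Giter (M : LMP S L) (Λ : Set (Set S)) (α : Ordinal) : Set (Set S) :=
  Ordinal.limitRecOn α Λ (fun _ prev => M.Gop prev)
    (fun o _ ih => sigmaGen (⋃ (o' : Ordinal) (h : o' < o), ih o' h))

/-- `Λ` is a sub-σ-algebra of the ambient σ-algebra. -/
structure IsSubSigmaAlgebra (Λ : Set (Set S)) : Prop where
  subset_meas : ∀ A ∈ Λ, MeasurableSet A
  empty_mem : (∅ : Set S) ∈ Λ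
  compl_mem : ∀ A ∈ Λ, Aᶜ ∈ Λ
  iUnion_mem : ∀ f : ℕ → Set S, (∀ n, f n ∈ Λ) → (⋃ n, f n) ∈ Λ

/-- A family `Λ` is stable w.r.t. the process. -/
def Stable (M : LMP S L) (Λ : Set (Set S)) : Prop :=
  ∀ A ∈ Λ, ∀ q : ℚ, 0 ≤ q → q ≤ 1 → ∀ a : L,
    {s : S | ENNReal.ofReal (q : ℝ) < M.τ a s A} ∈ Λ

/-- A state bisimulation: a symmetric relation such that related states agree on
all measurable `R`-closed sets. -/
def IsStateBisim (M : LMP S L) (R : Set (S × S)) : Prop :=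
  (∀ p ∈ R, (p.2, p.1) ∈ R) ∧
    ∀ p ∈ R, ∀ (a : L), ∀ C ∈ sigmaCl R, M.τ a p.1 C = M.τ a p.2 C

/-- State bisimilarity. -/
def stateBisim (M : LMP S L) : Set (S × S) :=
  {p | ∃ R, M.IsStateBisim R ∧ p ∈ R}

/-- Event bisimilarity: related by `R(Λ)` for some stable sub-σ-algebra `Λ`. -/
def eventBisim (M : LMP S L) : Set (S × S) :=
  {p | ∃ Λ : Set (Set S), IsSubSigmaAlgebra Λ ∧ M.Stable Λ ∧ p ∈ rel Λ}

/-- Formulas of the modal logic `𝓛`. -/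
inductive LForm (L : Type*) : Type _
  | top : LForm L
  | and : LForm L → LForm L → LForm L
  | dia : L → {q : ℚ // 0 ≤ q ∧ q < 1} → LForm L → LForm L

/-- Semantics of the logic `𝓛`. -/
def sem (M : LMP S L) : LForm L → Set S
  | LForm.top => Set.univ
  | LForm.and φ ψ => M.sem φ ∩ M.sem ψ
  | LForm.dia a q φ => {s | ENNReal.ofReal ((q : ℚ) : ℝ) < M.τ a s (M.sem φ)}

/-- `σ(⟦𝓛⟧)`: the σ-algebra generated by the sets definable in the logic. -/
def sigmaLogic (M : LMP S L) : Set (Set S) :=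
  sigmaGen (Set.range M.sem)

end LMP

/-! States that give every formula set the same transition probabilities satisfy the same
formulas (induction on formulas), hence lie in the same sets of `σ(⟦𝓛⟧)`. Both inclusions
reduce to this: the formula sets belong to `σ(⟦𝓛⟧)`, and they are `∼e`-closed. -/

namespace LMP

variable {S L : Type*}

theorem rel_subset_rel_sigmaGen (U : Set (Set S)) : rel U ⊆ rel (sigmaGen U) := by
  intro p hp A hA
  induction hA with
  | basic A hA => exact hp A hA
  | empty => simp
  | compl A _ ih => simp [ih]
  | iUnion f _ ih => simp only [Set.mem_iUnion]; exact exists_congr ih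

theorem rClosed_of_subset_rel {R : Set (S × S)} {Λ : Set (Set S)} (hR : R ⊆ rel Λ)
    {A : Set S} (hA : A ∈ Λ) : RClosed R A :=
  fun _ hx _ hxs => (hR hxs A hA).mp hx

variable [MeasurableSpace S]

theorem measurableSet_sem (M : LMP S L) (φ : LForm L) : MeasurableSet (M.sem φ) := by
  induction φ with
  | top => exact MeasurableSet.univ
  | and φ ψ hφ hψ => exact hφ.inter hψ
  | dia a q φ hφ => exact measurableSet_lt measurable_const (M.measurable_eval a _ hφ)

theorem sem_mem_sigmaLogic (M : LMP S L) (φ : LForm L) : M.sem φ ∈ M.sigmaLogic :=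
  MeasurableSpace.measurableSet_generateFrom ⟨φ, rfl⟩

theorem measurableSet_of_mem_sigmaLogic (M : LMP S L) {A : Set S} (hA : A ∈ M.sigmaLogic) :
    MeasurableSet A :=
  MeasurableSpace.generateFrom_le (by rintro _ ⟨φ, rfl⟩; exact M.measurableSet_sem φ) A hA

theorem relT_subset_rel_range_sem (M : LMP S L) {Λ : Set (Set S)}
    (hΛ : Set.range M.sem ⊆ Λ) : M.relT Λ ⊆ rel (Set.range M.sem) := by
  rintro ⟨x, s⟩ hxs _ ⟨φ, rfl⟩
  induction φ with
  | top => simp [sem]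
  | and φ ψ hφ hψ => simp only [sem, Set.mem_inter_iff, hφ, hψ]
  | dia a q φ _ => simp only [sem, Set.mem_ofPred_eq, hxs a _ (hΛ ⟨φ, rfl⟩)]

theorem relT_subset_rel_sigmaLogic (M : LMP S L) {Λ : Set (Set S)}
    (hΛ : Set.range M.sem ⊆ Λ) : M.relT Λ ⊆ rel M.sigmaLogic :=
  (M.relT_subset_rel_range_sem hΛ).trans (rel_subset_rel_sigmaGen _)

end LMP

open LMP in
theorem sigmaLogic_postfixpoint_and_eventBisim_prefixpoint_general
    {S L : Type*} [MeasurableSpace S] (M : LMP S L) :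
    M.sigmaLogic ⊆ M.Gop M.sigmaLogic ∧ M.Oop (rel M.sigmaLogic) ⊆ rel M.sigmaLogic := by
  constructor
  · have hT : M.relT M.sigmaLogic ⊆ rel M.sigmaLogic :=
      M.relT_subset_rel_sigmaLogic (Set.range_subset_iff.2 M.sem_mem_sigmaLogic)
    exact fun A hA => ⟨M.measurableSet_of_mem_sigmaLogic hA, rClosed_of_subset_rel hT hA⟩
  · have hsem : Set.range M.sem ⊆ sigmaCl (rel M.sigmaLogic) := by
      rintro _ ⟨φ, rfl⟩
      exact ⟨M.measurableSet_sem φ, rClosed_of_subset_rel subset_rfl (M.sem_mem_sigmaLogic φ)⟩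
    exact M.relT_subset_rel_sigmaLogic hsem

open LMP in
/-- `σ(⟦𝓛⟧)` is a post-fixpoint of `𝒢`, and event bisimilarity `∼e = R(σ(⟦𝓛⟧))` is a
pre-fixpoint of `𝒪`. -/
theorem sigmaLogic_postfixpoint_and_eventBisim_prefixpoint
    {S L : Type*} [MeasurableSpace S] [Countable L] (M : LMP S L) :
    M.sigmaLogic ⊆ M.Gop M.sigmaLogic ∧ M.Oop (rel M.sigmaLogic) ⊆ rel M.sigmaLogic :=
  sigmaLogic_postfixpoint_and_eventBisim_prefixpoint_general M
end

section
/- Let (S, Σ, {τ_a : a ∈ L}) be an LMP and Σ₀ ⊆ Σ a sub-σ-algebra such that R(Σ₀) = R^T(Σ₀); set Σ_α := G^α(Σ₀). Then for every ordinal α, Σ_α ⊆ Σ_{α+1}; hence the transfinite sequence (Σ_α) is increasing. -/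
open MeasureTheory

/-!
By transfinite induction, `Σ_α ⊆ 𝒢(Σ_α)` for every `α`. At `0` this holds because
`R^T(Σ₀) = R(Σ₀)` and every member of `Σ₀` is `R(Σ₀)`-closed; at a successor, monotonicity of `𝒢`
transports the inclusion one step up; at a limit `λ`, each generator `Σ_β` (`β < λ`) lies in
`𝒢(Σ_β) ⊆ 𝒢(Σ_λ)`, and `𝒢(Σ_λ)` is a σ-algebra because `R^T(Σ_λ)` is symmetric.
-/

namespace LMP

variable {S L : Type*}

lemma RClosed.compl {R : Set (S × S)} (hR : ∀ p ∈ R, (p.2, p.1) ∈ R) {A : Set S}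
    (hA : RClosed R A) : RClosed R Aᶜ :=
  fun _ hx _ hxs hsA => hx (hA hsA (hR _ hxs))

variable [MeasurableSpace S]

lemma sigmaGen_subset_sigmaCl {R : Set (S × S)} (hR : ∀ p ∈ R, (p.2, p.1) ∈ R)
    {U : Set (Set S)} (hU : U ⊆ sigmaCl R) : sigmaGen U ⊆ sigmaCl R := by
  intro A hA
  induction hA with
  | basic B hB => exact hU hB
  | empty => exact ⟨MeasurableSet.empty, fun _ hx => hx.elim⟩
  | compl B _ ih => exact ⟨ih.1.compl, ih.2.compl hR⟩
  | iUnion f _ ih =>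
    refine ⟨MeasurableSet.iUnion fun n => (ih n).1, fun x hx s hxs => ?_⟩
    obtain ⟨n, hn⟩ := Set.mem_iUnion.mp hx
    exact Set.mem_iUnion.mpr ⟨n, (ih n).2 hn hxs⟩

variable (M : LMP S L)

lemma swap_mem_relT (Λ : Set (Set S)) : ∀ p ∈ M.relT Λ, (p.2, p.1) ∈ M.relT Λ :=
  fun _ hp a E hE => (hp a E hE).symm

lemma Gop_mono {Λ Λ' : Set (Set S)} (h : Λ ⊆ Λ') : M.Gop Λ ⊆ M.Gop Λ' :=
  fun _ hA => ⟨hA.1, fun _ hx _ hxs => hA.2 hx fun a E hE => hxs a E (h hE)⟩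

lemma subset_Gop_of_relT_subset_rel {Λ : Set (Set S)} (hmeas : ∀ A ∈ Λ, MeasurableSet A)
    (h : M.relT Λ ⊆ rel Λ) : Λ ⊆ M.Gop Λ :=
  fun A hA => ⟨hmeas A hA, fun _ hx _ hxs => (h hxs A hA).mp hx⟩

@[simp]
lemma Giter_zero (Λ : Set (Set S)) : M.Giter Λ 0 = Λ :=
  Ordinal.limitRecOn_zero _ _ _

@[simp]
lemma Giter_add_one (Λ : Set (Set S)) (α : Ordinal) :
    M.Giter Λ (α + 1) = M.Gop (M.Giter Λ α) :=
  Ordinal.limitRecOn_add_one _ _ _ _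

lemma Giter_of_isSuccLimit (Λ : Set (Set S)) {α : Ordinal} (hα : Order.IsSuccLimit α) :
    M.Giter Λ α = sigmaGen (⋃ (β : Ordinal) (_ : β < α), M.Giter Λ β) :=
  Ordinal.limitRecOn_limit _ _ _ _ hα

lemma Giter_subset_Giter_of_isSuccLimit (Λ : Set (Set S)) {α β : Ordinal}
    (hα : Order.IsSuccLimit α) (hβ : β < α) : M.Giter Λ β ⊆ M.Giter Λ α := by
  rw [M.Giter_of_isSuccLimit Λ hα]
  exact fun A hA => MeasurableSpace.measurableSet_generateFrom (Set.mem_biUnion hβ hA)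

lemma Giter_subset_Gop_Giter {Λ : Set (Set S)} (h₀ : Λ ⊆ M.Gop Λ) (α : Ordinal) :
    M.Giter Λ α ⊆ M.Gop (M.Giter Λ α) := by
  induction α using Ordinal.limitRecOn with
  | zero => simpa using h₀
  | add_one α ih => simpa using M.Gop_mono ih
  | limit α hα ih =>
    have hgen : (⋃ (β : Ordinal) (_ : β < α), M.Giter Λ β) ⊆ M.Gop (M.Giter Λ α) := by
      simp only [Set.iUnion_subset_iff]
      exact fun β hβ => (ih β hβ).trans
        (M.Gop_mono (M.Giter_subset_Giter_of_isSuccLimit Λ hα hβ))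
    intro A hA
    rw [M.Giter_of_isSuccLimit Λ hα] at hA
    exact sigmaGen_subset_sigmaCl (M.swap_mem_relT _) hgen hA

end LMP

open LMP in
theorem Giter_subset_succ_general
    {S L : Type*} [MeasurableSpace S]
    (M : LMP S L) (Sig₀ : Set (Set S)) (hSig₀ : IsSubSigmaAlgebra Sig₀)
    (h : rel Sig₀ = M.relT Sig₀) (α : Ordinal) :
    M.Giter Sig₀ α ⊆ M.Giter Sig₀ (α + 1) := by
  rw [M.Giter_add_one]
  exact M.Giter_subset_Gop_Giter (M.subset_Gop_of_relT_subset_rel hSig₀.subset_meas h.ge) α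

open LMP in
/-- If `Sig₀ ⊆ Σ` is a sub-σ-algebra with `R(Sig₀) = R^T(Sig₀)`, then the transfinite sequence
`Σ_α := 𝒢^α(Sig₀)` is increasing: `Σ_α ⊆ Σ_{α+1}`. -/
theorem Giter_subset_succ
    {S L : Type*} [MeasurableSpace S] [Countable L]
    (M : LMP S L) (Sig₀ : Set (Set S)) (hSig₀ : IsSubSigmaAlgebra Sig₀)
    (h : rel Sig₀ = M.relT Sig₀) (α : Ordinal) :
    M.Giter Sig₀ α ⊆ M.Giter Sig₀ (α + 1) :=
  Giter_subset_succ_general M Sig₀ hSig₀ h α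
end

section
/- Let (S, Σ, {τ_a : a ∈ L}) be an LMP and Λ ⊆ Σ a sub-σ-algebra such that Σ(R(Λ)) = Λ. Then the following are equivalent: (1) Λ is stable; (2) R(Λ) ⊆ R^T(Λ); (3) R(Λ) is a state bisimulation. -/
open MeasureTheory

/-!
Because `Σ(R(Λ)) = Λ`, membership in `Λ` of a measurable set means being a union of
`R(Λ)`-classes. So stability says that `R(Λ)`-related states agree on every threshold
event `q < τ_a(·, A)`, which for values in `[0, 1]` is the same as agreeing on `τ_a(·, A)`;
and the state-bisimulation condition for `R(Λ)` quantifies over `Σ(R(Λ)) = Λ`, so it is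
`R(Λ) ⊆ R^T(Λ)` verbatim.
-/

theorem ENNReal.le_of_forall_rat_lt_imp_lt {x y : ENNReal} (hx : x ≤ 1)
    (h : ∀ q : ℚ, 0 ≤ q → q ≤ 1 → ENNReal.ofReal q < x → ENNReal.ofReal q < y) : x ≤ y := by
  by_contra! hyx
  obtain ⟨q, hq0, hyq, hqx⟩ := ENNReal.lt_iff_exists_rat_btwn.1 hyx
  have hq1 : (q : ℝ) < 1 := ENNReal.ofReal_lt_one.1 (hqx.trans_le hx)
  exact (h q hq0 (by exact_mod_cast hq1.le) hqx).not_gt hyq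

namespace LMP

theorem rel_symm {S : Type*} {Λ : Set (Set S)} {p : S × S} (hp : p ∈ rel Λ) :
    (p.2, p.1) ∈ rel Λ :=
  fun A hA => (hp A hA).symm

variable {S L : Type*} [MeasurableSpace S]

theorem measure_le_one (M : LMP S L) (a : L) (s : S) (E : Set S) : M.τ a s E ≤ 1 :=
  (measure_mono (Set.subset_univ E)).trans (M.prob_le_one a s)

theorem rel_subset_relT_of_stable (M : LMP S L) {Λ : Set (Set S)} (hst : M.Stable Λ) :
    rel Λ ⊆ M.relT Λ := by
  intro p hp a E hE
  have agree : ∀ q : ℚ, 0 ≤ q → q ≤ 1 →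
      (ENNReal.ofReal q < M.τ a p.1 E ↔ ENNReal.ofReal q < M.τ a p.2 E) :=
    fun q hq0 hq1 => hp _ (hst E hE q hq0 hq1 a)
  exact le_antisymm
    (ENNReal.le_of_forall_rat_lt_imp_lt (M.measure_le_one a p.1 E)
      fun q hq0 hq1 => (agree q hq0 hq1).1)
    (ENNReal.le_of_forall_rat_lt_imp_lt (M.measure_le_one a p.2 E)
      fun q hq0 hq1 => (agree q hq0 hq1).2)

theorem rclosed_setOf_lt_of_subset_relT (M : LMP S L) {R : Set (S × S)} {Λ : Set (Set S)}
    (hR : R ⊆ M.relT Λ) {A : Set S} (hA : A ∈ Λ) (r : ENNReal) (a : L) :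
    RClosed R {s | r < M.τ a s A} := by
  intro x hx s hxs
  show r < _
  rwa [← hR hxs a A hA]

theorem stable_of_rel_subset_relT (M : LMP S L) {Λ : Set (Set S)}
    (hfix : sigmaCl (rel Λ) = Λ) (hsub : rel Λ ⊆ M.relT Λ) : M.Stable Λ := by
  intro A hA q _ _ a
  have hAmeas : MeasurableSet A := by
    rw [← hfix] at hA
    exact hA.1
  rw [← hfix]
  exact ⟨measurableSet_lt measurable_const (M.measurable_eval a A hAmeas),
    M.rclosed_setOf_lt_of_subset_relT hsub hA _ a⟩

theorem isStateBisim_rel_iff (M : LMP S L) (Λ : Set (Set S)) :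
    M.IsStateBisim (rel Λ) ↔ rel Λ ⊆ M.relT (sigmaCl (rel Λ)) :=
  and_iff_right fun _ => rel_symm

end LMP

open LMP in
theorem stable_iff_rel_subset_relT_iff_isStateBisim_general
    {S L : Type*} [MeasurableSpace S]
    (M : LMP S L) (Λ : Set (Set S))
    (hfix : sigmaCl (rel Λ) = Λ) :
    (M.Stable Λ ↔ rel Λ ⊆ M.relT Λ) ∧
      (rel Λ ⊆ M.relT Λ ↔ M.IsStateBisim (rel Λ)) := by
  refine ⟨⟨M.rel_subset_relT_of_stable, M.stable_of_rel_subset_relT hfix⟩, ?_⟩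
  rw [isStateBisim_rel_iff, hfix]

open LMP in
/-- Let `Λ ⊆ Σ` be a sub-σ-algebra with `Σ(R(Λ)) = Λ`. Then the following are equivalent:
(1) `Λ` is stable; (2) `R(Λ) ⊆ R^T(Λ)`; (3) `R(Λ)` is a state bisimulation. -/
theorem stable_iff_rel_subset_relT_iff_isStateBisim
    {S L : Type*} [MeasurableSpace S] [Countable L]
    (M : LMP S L) (Λ : Set (Set S)) (hΛ : IsSubSigmaAlgebra Λ)
    (hfix : sigmaCl (rel Λ) = Λ) :
    (M.Stable Λ ↔ rel Λ ⊆ M.relT Λ) ∧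
      (rel Λ ⊆ M.relT Λ ↔ M.IsStateBisim (rel Λ)) :=
  stable_iff_rel_subset_relT_iff_isStateBisim_general M Λ hfix
end
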